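/- arXiv:1406.1849 — 2 statements merged into one kernel-verified Lean document; each statement's English description precedes it below -/
import Mathlib

section
/- (Strong Hammersley-Clifford theorem, part 2.) Let X ⊆ 𝒜^𝒱 be a topological Markov field with a safe symbol, invariant under a subgroup G ⊆ Aut(𝒢). Then every G-invariant Markov cocycle on X is a Gibbs cocycle with some G-invariant nearest neighbour interaction, i.e. 𝐌^G_X = 𝐆^G_X. -/
open scoped Classical

namespace HC

variable {V : Type*} {A : Type*}

/-- The external vertex boundary of a set of vertices. -/
def boundary (G : SimpleGraph V) (F : Set V) : Set V :=
  {u | u ∉ F ∧ ∃ v ∈ F, G.Adj u v}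

/-- The language of `X` on `F`: the set of patterns on `F` appearing in `X`. -/
def lang (X : Set (V → A)) (F : Set V) : Set (F → A) :=
  F.restrict '' X

/-- The `n`-ball around `v` in the graph metric. -/
def ballSet (G : SimpleGraph V) (v : V) (n : ℕ) : Set V :=
  {u | ∃ p : G.Walk v u, p.length ≤ n}

/-- Asymptotic pairs: pairs of configurations in `X` differing at finitely many sites. -/
def Delta (X : Set (V → A)) : Set ((V → A) × (V → A)) :=
  {p | p.1 ∈ X ∧ p.2 ∈ X ∧ {v | p.1 v ≠ p.2 v}.Finite}

/-- Topological Markov field. -/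
def IsTMF [TopologicalSpace A] (G : SimpleGraph V) (X : Set (V → A)) : Prop :=
  IsClosed X ∧
    ∀ x ∈ X, ∀ y ∈ X, ∀ F : Set V, F.Finite →
      (∀ u ∈ boundary G F, x u = y u) →
      (fun v => if v ∈ F then x v else y v) ∈ X

/-- Nearest neighbour constraint space: the set of configurations avoiding a
set of forbidden patterns on finite cliques. -/
def IsNNConstraint (G : SimpleGraph V) (X : Set (V → A)) : Prop :=
  ∃ 𝓕 : ∀ F : Set V, Set (F → A),
    X = {x : V → A | ∀ F : Set V, F.Finite → G.IsClique F → F.restrict x ∉ 𝓕 F}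

/-- `s` is a safe symbol for `X`. -/
def IsSafeSymbol (X : Set (V → A)) (s : A) : Prop :=
  ∀ x ∈ X, ∀ S : Set V, (fun v => if v ∈ S then x v else s) ∈ X

/-- The pattern `(c at v, d at w)` belongs to the language of `X`. -/
def edgeB (X : Set (V → A)) (v w : V) (c d : A) : Prop :=
  ∃ x ∈ X, x v = c ∧ x w = d

/-- The single-site pattern `c at v` belongs to the language of `X`. -/
def siteB (X : Set (V → A)) (v : V) (c : A) : Prop :=
  ∃ x ∈ X, x v = c

/-- The pairs `(x,y)` and `(z,w)` are Markov-similar. -/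
def MarkovSimilar (G : SimpleGraph V) (x y z w : V → A) : Prop :=
  ∃ S : Set V, S.Finite ∧
    (∀ u, u ∉ S → x u = y u ∧ z u = w u) ∧
    (∀ u, u ∈ S ∪ boundary G S → x u = z u ∧ y u = w u)

/-- A Markov cocycle on `X` (realised as a real function on pairs of
configurations, vanishing off the asymptotic relation `Δ_X`). -/
def IsMarkovCocycle (G : SimpleGraph V) (X : Set (V → A))
    (M : (V → A) → (V → A) → ℝ) : Prop :=
  (∀ x y : V → A, (x, y) ∉ Delta X → M x y = 0) ∧
  (∀ x y z : V → A, (x, y) ∈ Delta X → (y, z) ∈ Delta X → M x z = M x y + M y z) ∧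
  (∀ x y z w : V → A, (x, y) ∈ Delta X → (z, w) ∈ Delta X →
    MarkovSimilar G x y z w → M x y = M z w)

/-- A nearest neighbour interaction: a real weight for each pattern,
vanishing on patterns whose domain is not a finite clique. -/
def IsNNInteraction (G : SimpleGraph V) (U : ∀ F : Set V, (F → A) → ℝ) : Prop :=
  ∀ F : Set V, ¬(F.Finite ∧ G.IsClique F) → ∀ p : F → A, U F p = 0

/-- `Σ_{F ⊆ V finite} (U(y|_F) - U(x|_F))`. -/
noncomputable def gibbsSum (U : ∀ F : Set V, (F → A) → ℝ) (x y : V → A) : ℝ :=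
  ∑ᶠ F : Set V, (U F (F.restrict y) - U F (F.restrict x))

/-- A Gibbs cocycle with some nearest neighbour interaction. -/
def IsGibbsCocycle (G : SimpleGraph V) (X : Set (V → A))
    (M : (V → A) → (V → A) → ℝ) : Prop :=
  (∀ x y : V → A, (x, y) ∉ Delta X → M x y = 0) ∧
  ∃ U : ∀ F : Set V, (F → A) → ℝ, IsNNInteraction G U ∧
    ∀ x y : V → A, (x, y) ∈ Delta X → M x y = gibbsSum U x y

/-- The space `𝐌_X` of Markov cocycles on `X`. -/
def markovSet (G : SimpleGraph V) (X : Set (V → A)) :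
    Set ((V → A) → (V → A) → ℝ) :=
  {M | IsMarkovCocycle G X M}

/-- The space `𝐆_X` of Gibbs cocycles with nearest neighbour interactions on `X`. -/
def gibbsSet (G : SimpleGraph V) (X : Set (V → A)) :
    Set ((V → A) → (V → A) → ℝ) :=
  {M | IsGibbsCocycle G X M}

/-- `X` is Hammersley-Clifford: `𝐌_X = 𝐆_X`. -/
def IsHammersleyClifford (G : SimpleGraph V) (X : Set (V → A)) : Prop :=
  markovSet G X = gibbsSet G X

/-- The action of a permutation of the vertices on configurations. -/
def confAct (g : Equiv.Perm V) (x : V → A) : V → A :=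
  fun v => x (g⁻¹ v)

/-- `S` consists of automorphisms of the graph `G`. -/
def PreservesAdj (G : SimpleGraph V) (S : Subgroup (Equiv.Perm V)) : Prop :=
  ∀ g ∈ S, ∀ u v : V, G.Adj (g u) (g v) ↔ G.Adj u v

/-- `X` is invariant under the subgroup `S`. -/
def InvariantSpace (S : Subgroup (Equiv.Perm V)) (X : Set (V → A)) : Prop :=
  ∀ g ∈ S, confAct g '' X = X

/-- The cocycle `M` is `S`-invariant. -/
def InvariantCocycle (S : Subgroup (Equiv.Perm V)) (M : (V → A) → (V → A) → ℝ) : Prop :=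
  ∀ g ∈ S, ∀ x y : V → A, M (confAct g x) (confAct g y) = M x y

/-- The interaction `U` is `S`-invariant: `U(ga) = U(a)` for every pattern `a`. -/
def InvariantInteraction (S : Subgroup (Equiv.Perm V))
    (U : ∀ F : Set V, (F → A) → ℝ) : Prop :=
  ∀ g ∈ S, ∀ F : Set V, ∀ x : V → A,
    U (⇑g '' F) ((⇑g '' F).restrict (confAct g x)) = U F (F.restrict x)

/-- The space `𝐌^G_X` of `S`-invariant Markov cocycles on `X`. -/
def markovSetInv (G : SimpleGraph V) (S : Subgroup (Equiv.Perm V)) (X : Set (V → A)) :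
    Set ((V → A) → (V → A) → ℝ) :=
  {M | IsMarkovCocycle G X M ∧ InvariantCocycle S M}

/-- The space `𝐆^G_X` of Gibbs cocycles with `S`-invariant nearest neighbour
interactions on `X`. -/
def gibbsSetInv (G : SimpleGraph V) (S : Subgroup (Equiv.Perm V)) (X : Set (V → A)) :
    Set ((V → A) → (V → A) → ℝ) :=
  {M | (∀ x y : V → A, (x, y) ∉ Delta X → M x y = 0) ∧
    ∃ U : ∀ F : Set V, (F → A) → ℝ, IsNNInteraction G U ∧ InvariantInteraction S U ∧
      ∀ x y : V → A, (x, y) ∈ Delta X → M x y = gibbsSum U x y}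

/-- `X` is `G`-Hammersley-Clifford: `𝐌^G_X = 𝐆^G_X`. -/
def IsGHammersleyClifford (G : SimpleGraph V) (S : Subgroup (Equiv.Perm V))
    (X : Set (V → A)) : Prop :=
  markovSetInv G S X = gibbsSetInv G S X

/-- The symbol `a` can be folded into the symbol `b` in `X`. -/
def FoldsInto (G : SimpleGraph V) (X : Set (V → A)) (a b : A) : Prop :=
  a ≠ b ∧
    ∀ v₁ v₂ v₃ : V, G.Adj v₁ v₂ → G.Adj v₂ v₃ → ∀ c : A,
      edgeB X v₁ v₂ a c →
        edgeB X v₁ v₂ b c ∧ edgeB X v₂ v₃ c b ∧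
          ∃ x ∈ X, ∀ u ∈ boundary G (ballSet G v₁ 1), x u = b

/-- `X ∩ (𝒜∖{a})^𝒱`. -/
def foldSpace (X : Set (V → A)) (a : A) : Set (V → A) :=
  X ∩ {x | ∀ v, x v ≠ a}

/-- `Y` is a fold of `X` (and `X` an unfold of `Y`). -/
def IsFoldOf (G : SimpleGraph V) (Y X : Set (V → A)) : Prop :=
  ∃ a b : A, FoldsInto G X a b ∧ Y = foldSpace X a

/-- `P₁, P₂` are the partite classes of a bipartition of `G`. -/
def IsBipartition (G : SimpleGraph V) (P₁ P₂ : Set V) : Prop :=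
  (∀ v : V, v ∈ P₁ ∨ v ∈ P₂) ∧ Disjoint P₁ P₂ ∧
    ∀ u v : V, G.Adj u v → (u ∈ P₁ ∧ v ∈ P₂) ∨ (u ∈ P₂ ∧ v ∈ P₁)

/-- `G` is bipartite. -/
def Bipartite (G : SimpleGraph V) : Prop :=
  ∃ P₁ P₂ : Set V, IsBipartition G P₁ P₂

/-- `θ^v_c(x)`: change the value of `x` at `v` to `c`. -/
noncomputable def theta (x : V → A) (v : V) (c : A) : V → A :=
  fun u => if u = v then c else x u

/-- `θ^{w₁,…,w_r}_{c₁,…,c_r}(x)`: change the value of `x` at each `w i` to `c i`. -/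
noncomputable def multiUpdate (x : V → A) {r : ℕ} (w : Fin r → V) (c : Fin r → A) :
    V → A :=
  fun u => if h : ∃ i, w i = u then c h.choose else x u

/-- Restriction of a cocycle to the asymptotic pairs of a subspace `Y`. -/
noncomputable def restrictCocycle (Y : Set (V → A)) (M : (V → A) → (V → A) → ℝ) :
    (V → A) → (V → A) → ℝ :=
  fun x y => if (x, y) ∈ Delta Y then M x y else 0

/-- The pair `(x,y)` is `U`-good for the cocycle `M`. -/
def VGood (M : (V → A) → (V → A) → ℝ) (U : ∀ F : Set V, (F → A) → ℝ)
    (x y : V → A) : Prop :=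
  M x y = gibbsSum U x y

/-- `𝒱₁`: vertices `v` admitting a neighbour `w` with `(a,a) ∈ ℬ_{v,w}(X)`. -/
def Vone (G : SimpleGraph V) (X : Set (V → A)) (a : A) : Set V :=
  {v | ∃ w, G.Adj v w ∧ edgeB X v w a a}

/-- `𝒱₂`: vertices not in `𝒱₁` where the symbol `a` can appear. -/
def Vtwo (G : SimpleGraph V) (X : Set (V → A)) (a : A) : Set V :=
  {v | v ∉ Vone G X a ∧ siteB X v a}

/-- The space of graph homomorphisms from `G` to `H`, as a configuration space. -/
def homSpace {B : Type*} (G : SimpleGraph V) (H : SimpleGraph B) : Set (V → B) :=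
  {x | ∀ v w : V, G.Adj v w → H.Adj (x v) (x w)}

/-!
Write `σ` for the configuration that is constantly the safe symbol `⋆`. For a Markov cocycle `M`
and `z ∈ X`, consider the energy `E ↦ M(σ, z|_E ⋆)` of finite sets of sites, where `z|_E ⋆`
agrees with `z` on `E` and is `⋆` elsewhere (it lies in `X` because `⋆` is safe). Its Möbius
transform is an interaction on finite patterns. If `F` contains two non-adjacent sites `v, w`,
the Markov property says that the energy increment of adding `v` does not depend on `w`, so the
Möbius transform over `F` vanishes: the interaction is nearest neighbour. Möbius inversion gives
back `M(σ, z)` as the Gibbs sum from `σ` to `z`, and a general pair `(x, y) ∈ Δ_X` reduces to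
this case by the Markov property, after filling both with `⋆` outside the closed neighbourhood of
the set where they differ. The construction is canonical, so invariance of `M` under graph
automorphisms passes to the interaction. Conversely, on a locally finite graph the Gibbs sums of a
nearest neighbour interaction are finite, and they form an invariant Markov cocycle.
-/

section Mobius

variable {ι κ R : Type*} [CommRing R]

def mobiusTransform (h : Finset ι → R) (F : Finset ι) : R :=
  ∑ E ∈ F.powerset, (-1) ^ (F.card - E.card) * h E

theorem mobiusTransform_congr {h h' : Finset ι → R} {F : Finset ι}
    (hh : ∀ E ⊆ F, h E = h' E) : mobiusTransform h F = mobiusTransform h' F :=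
  Finset.sum_congr rfl fun E hE => by rw [hh E (Finset.mem_powerset.1 hE)]

theorem mobiusTransform_zero (F : Finset ι) : mobiusTransform (0 : Finset ι → R) F = 0 := by
  simp [mobiusTransform]

theorem mobiusTransform_sub (h h' : Finset ι → R) (F : Finset ι) :
    mobiusTransform (h - h') F = mobiusTransform h F - mobiusTransform h' F := by
  simp only [mobiusTransform, Pi.sub_apply, mul_sub, Finset.sum_sub_distrib]

theorem mobiusTransform_insert (h : Finset ι → R) {v : ι} {F : Finset ι} (hv : v ∉ F) :
    mobiusTransform h (insert v F) =
      mobiusTransform (fun E => h (insert v E)) F - mobiusTransform h F := by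
  rw [mobiusTransform, Finset.sum_powerset_insert hv, Finset.card_insert_of_notMem hv,
    add_comm, sub_eq_add_neg, mobiusTransform, mobiusTransform, ← Finset.sum_neg_distrib]
  congr 1 <;> refine Finset.sum_congr rfl fun E hE => ?_
  · have hvE : v ∉ E := fun h => hv (Finset.mem_powerset.1 hE h)
    rw [Finset.card_insert_of_notMem hvE, Nat.add_sub_add_right]
  · have hle := Finset.card_le_card (Finset.mem_powerset.1 hE)
    rw [Nat.sub_add_comm hle, pow_succ]
    ring

theorem mobiusTransform_image (h : Finset κ → R) {f : ι → κ} (hf : Function.Injective f)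
    (F : Finset ι) :
    mobiusTransform h (F.image f) = mobiusTransform (fun E => h (E.image f)) F := by
  rw [mobiusTransform, Finset.powerset_image,
    Finset.sum_image fun E _ E' _ => (Finset.image_injective hf).eq_iff.1]
  simp only [Finset.card_image_of_injective _ hf, mobiusTransform]

theorem sum_powerset_mobiusTransform (h : Finset ι → R) (F : Finset ι) :
    ∑ E ∈ F.powerset, mobiusTransform h E = h F := by
  induction F using Finset.induction_on generalizing h with
  | empty => simp [mobiusTransform]
  | insert v F hv ih =>
    have hins : ∀ E ∈ F.powerset, mobiusTransform h (insert v E) =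
        mobiusTransform (fun E => h (insert v E)) E - mobiusTransform h E :=
      fun E hE => mobiusTransform_insert h fun hvE => hv (Finset.mem_powerset.1 hE hvE)
    rw [Finset.sum_powerset_insert hv, Finset.sum_congr rfl hins, Finset.sum_sub_distrib,
      ih h, ih fun E => h (insert v E)]
    ring

theorem mobiusTransform_eq_zero_of_insert_eq {h : Finset ι → R} {F : Finset ι} {v : ι}
    (hv : v ∈ F) (hh : ∀ E ⊆ F.erase v, h (insert v E) = h E) :
    mobiusTransform h F = 0 := by
  rw [← Finset.insert_erase hv, mobiusTransform_insert h (Finset.notMem_erase v F),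
    mobiusTransform_congr hh, sub_self]

theorem mobiusTransform_eq_zero_of_insert_sub_eq {h : Finset ι → R} {F : Finset ι} {v w : ι}
    (hv : v ∈ F) (hw : w ∈ F) (hvw : v ≠ w)
    (hh : ∀ E ⊆ (F.erase v).erase w,
      h (insert v (insert w E)) - h (insert w E) = h (insert v E) - h E) :
    mobiusTransform h F = 0 := by
  rw [← Finset.insert_erase hv, mobiusTransform_insert h (Finset.notMem_erase v F),
    ← mobiusTransform_sub]
  exact mobiusTransform_eq_zero_of_insert_eq (Finset.mem_erase.2 ⟨hvw.symm, hw⟩) hh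

end Mobius

section Configurations

theorem finite_boundary {G : SimpleGraph V} (hlf : ∀ v : V, (G.neighborSet v).Finite)
    {D : Set V} (hD : D.Finite) : (boundary G D).Finite :=
  (hD.biUnion fun v _ => hlf v).subset fun _ ⟨_, _, hv, huv⟩ => Set.mem_biUnion hv huv.symm

noncomputable def fillOff (s : A) (E : Set V) (z : V → A) : V → A :=
  fun v => if v ∈ E then z v else s

noncomputable def fillPattern (s : A) {F : Set V} (p : F → A) : V → A :=
  fun v => if h : v ∈ F then p ⟨v, h⟩ else s

variable (s : A)

theorem fillPattern_restrict (F : Set V) (z : V → A) :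
    fillPattern s (F.restrict z) = fillOff s F z := by
  funext v
  by_cases h : v ∈ F <;> simp [fillPattern, fillOff, h, Set.restrict]

theorem fillOff_empty (z : V → A) : fillOff s ∅ z = fun _ => s := by
  funext v
  simp [fillOff]

theorem fillOff_const (E : Set V) : fillOff s E (fun _ => s) = fun _ => s := by
  funext v
  simp [fillOff]

theorem fillOff_fillOff {E F : Set V} (hEF : E ⊆ F) (z : V → A) :
    fillOff s E (fillOff s F z) = fillOff s E z := by
  funext v
  by_cases h : v ∈ E
  · simp [fillOff, h, hEF h]
  · simp [fillOff, h]

theorem fillOff_eq_self {E : Set V} {z : V → A} (hz : ∀ v ∉ E, z v = s) :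
    fillOff s E z = z := by
  funext v
  by_cases h : v ∈ E <;> simp [fillOff, h, hz]

theorem fillOff_insert_of_eq (E : Set V) {z : V → A} {v : V} (hv : z v = s) :
    fillOff s (insert v E) z = fillOff s E z := by
  funext u
  by_cases huv : u = v
  · subst huv
    simp [fillOff, hv]
  · simp [fillOff, huv]

theorem fillOff_confAct (g : Equiv.Perm V) (E : Set V) (z : V → A) :
    fillOff s (g '' E) (confAct g z) = confAct g (fillOff s E z) := by
  funext v
  simp [fillOff, confAct, Set.mem_image_equiv]

theorem setOf_fillOff_ne_subset (E : Set V) (z : V → A) : {v | fillOff s E z v ≠ s} ⊆ E :=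
  fun v hv => by_contra fun h => hv (by simp [fillOff, h])

theorem fillOff_mem_Delta {X : Set (V → A)} (hs : IsSafeSymbol X s) {z : V → A} (hz : z ∈ X)
    {E E' : Set V} (hE : E.Finite) (hE' : E'.Finite) :
    (fillOff s E z, fillOff s E' z) ∈ Delta X := by
  refine ⟨hs z hz E, hs z hz E', (hE.union hE').subset fun v hv => by_contra fun h => hv ?_⟩
  simp only [Set.mem_union, not_or] at h
  simp [fillOff, h.1, h.2]

end Configurations

theorem Delta_trans {X : Set (V → A)} {x y z : V → A} (hxy : (x, y) ∈ Delta X)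
    (hyz : (y, z) ∈ Delta X) : (x, z) ∈ Delta X :=
  ⟨hxy.1, hyz.2.1, (hxy.2.2.union hyz.2.2).subset fun v hv =>
    by_contra fun h => hv (by simp_all)⟩

theorem confAct_inv_confAct (g : Equiv.Perm V) (x : V → A) : confAct g⁻¹ (confAct g x) = x := by
  funext v
  simp [confAct]

theorem confAct_mem_Delta {S : Subgroup (Equiv.Perm V)} {X : Set (V → A)}
    (hXinv : InvariantSpace S X) {g : Equiv.Perm V} (hg : g ∈ S) {x y : V → A}
    (hxy : (x, y) ∈ Delta X) : (confAct g x, confAct g y) ∈ Delta X := by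
  obtain ⟨hx, hy, hD⟩ := hxy
  refine ⟨hXinv g hg ▸ Set.mem_image_of_mem _ hx, hXinv g hg ▸ Set.mem_image_of_mem _ hy,
    (hD.image g).subset fun v hv => ⟨g⁻¹ v, hv, by simp⟩⟩

theorem confAct_mem_Delta_iff {S : Subgroup (Equiv.Perm V)} {X : Set (V → A)}
    (hXinv : InvariantSpace S X) {g : Equiv.Perm V} (hg : g ∈ S) {x y : V → A} :
    (confAct g x, confAct g y) ∈ Delta X ↔ (x, y) ∈ Delta X := by
  refine ⟨fun h => ?_, confAct_mem_Delta hXinv hg⟩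
  simpa only [confAct_inv_confAct] using confAct_mem_Delta hXinv (inv_mem hg) h

namespace IsMarkovCocycle

variable {G : SimpleGraph V} {X : Set (V → A)} {M : (V → A) → (V → A) → ℝ}

theorem apply_self (hM : IsMarkovCocycle G X M) {x : V → A} (hx : x ∈ X) : M x x = 0 := by
  have hxx : (x, x) ∈ Delta X := ⟨hx, hx, by simp⟩
  linarith [hM.2.1 x x x hxx hxx]

theorem eq_sub (hM : IsMarkovCocycle G X M) {w x y : V → A} (hwx : (w, x) ∈ Delta X)
    (hxy : (x, y) ∈ Delta X) : M x y = M w y - M w x := by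
  linarith [hM.2.1 w x y hwx hxy]

end IsMarkovCocycle

namespace IsNNInteraction

variable {G : SimpleGraph V} {U : ∀ F : Set V, (F → A) → ℝ}

theorem subset_union_boundary (hU : IsNNInteraction G U) {x y : V → A} {S F : Set V}
    (hxy : ∀ u ∉ S, x u = y u) (hF : U F (F.restrict y) - U F (F.restrict x) ≠ 0) :
    F ⊆ S ∪ boundary G S := by
  have hcl : G.IsClique F := by
    by_contra hc
    simp [hU F fun h => hc h.2] at hF
  obtain ⟨⟨v, hvF⟩, hv⟩ := Function.ne_iff.1 fun h : F.restrict x = F.restrict y =>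
    hF (by rw [h, sub_self])
  have hvS : v ∈ S := by_contra fun h => hv (hxy v h)
  intro u huF
  by_cases huS : u ∈ S
  · exact Or.inl huS
  · exact Or.inr ⟨huS, v, hvS, hcl huF hvF fun h => huS (h ▸ hvS)⟩

theorem finite_support_gibbs (hU : IsNNInteraction G U)
    (hlf : ∀ v : V, (G.neighborSet v).Finite) {x y : V → A} (hD : {v | x v ≠ y v}.Finite) :
    (Function.support fun F : Set V => U F (F.restrict y) - U F (F.restrict x)).Finite :=
  (hD.union (finite_boundary hlf hD)).finite_subsets.subset fun _ hF =>
    hU.subset_union_boundary (fun _ h => not_not.1 h) hF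

theorem gibbsSum_add (hU : IsNNInteraction G U) (hlf : ∀ v : V, (G.neighborSet v).Finite)
    {x y z : V → A} (hxy : {v | x v ≠ y v}.Finite) (hyz : {v | y v ≠ z v}.Finite) :
    gibbsSum U x z = gibbsSum U x y + gibbsSum U y z := by
  rw [gibbsSum, gibbsSum, gibbsSum, ← finsum_add_distrib (hU.finite_support_gibbs hlf hxy)
    (hU.finite_support_gibbs hlf hyz)]
  exact finsum_congr fun F => by ring

theorem gibbsSum_eq_of_markovSimilar (hU : IsNNInteraction G U) {x y z w : V → A}
    (hsim : MarkovSimilar G x y z w) : gibbsSum U x y = gibbsSum U z w := by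
  obtain ⟨S, -, hoff, hon⟩ := hsim
  refine finsum_congr fun F => ?_
  by_cases hFS : F ⊆ S ∪ boundary G S
  · have hx : F.restrict x = F.restrict z := funext fun u => (hon u (hFS u.2)).1
    have hy : F.restrict y = F.restrict w := funext fun u => (hon u (hFS u.2)).2
    rw [hx, hy]
  · rw [not_not.1 fun h => hFS (hU.subset_union_boundary (fun u hu => (hoff u hu).1) h),
      not_not.1 fun h => hFS (hU.subset_union_boundary (fun u hu => (hoff u hu).2) h)]

theorem isMarkovCocycle {X : Set (V → A)} {M : (V → A) → (V → A) → ℝ}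
    (hU : IsNNInteraction G U) (hlf : ∀ v : V, (G.neighborSet v).Finite)
    (hM0 : ∀ x y : V → A, (x, y) ∉ Delta X → M x y = 0)
    (hMU : ∀ x y : V → A, (x, y) ∈ Delta X → M x y = gibbsSum U x y) :
    IsMarkovCocycle G X M := by
  refine ⟨hM0, fun x y z hxy hyz => ?_, fun x y z w hxy hzw hsim => ?_⟩
  · rw [hMU x y hxy, hMU y z hyz, hMU x z (Delta_trans hxy hyz)]
    exact hU.gibbsSum_add hlf hxy.2.2 hyz.2.2
  · rw [hMU x y hxy, hMU z w hzw]
    exact hU.gibbsSum_eq_of_markovSimilar hsim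

end IsNNInteraction

theorem gibbsSum_confAct {U : ∀ F : Set V, (F → A) → ℝ} {g : Equiv.Perm V}
    (hUg : ∀ (F : Set V) (x : V → A),
      U (g '' F) ((g '' F).restrict (confAct g x)) = U F (F.restrict x))
    (x y : V → A) : gibbsSum U (confAct g x) (confAct g y) = gibbsSum U x y := by
  refine (finsum_eq_of_bijective (g '' ·) (Equiv.bijective (Equiv.Set.congr g)) fun F => ?_).symm
  rw [hUg F x, hUg F y]

section CliquePotential

variable (G : SimpleGraph V) {X : Set (V → A)} (M : (V → A) → (V → A) → ℝ) (s : A)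

noncomputable def safeEnergy (z : V → A) (E : Finset V) : ℝ :=
  M (fun _ => s) (fillOff s E z)

noncomputable def cliquePotential : ∀ F : Set V, (F → A) → ℝ := fun F p =>
  if h : F.Finite ∧ G.IsClique F then
    mobiusTransform (safeEnergy M s (fillPattern s p)) h.1.toFinset
  else 0

theorem isNNInteraction_cliquePotential : IsNNInteraction G (cliquePotential G M s) :=
  fun _ hF _ => dif_neg hF

variable {G M s}

theorem cliquePotential_restrict (F : Finset V) (z : V → A) :
    cliquePotential G M s F ((F : Set V).restrict z) =
      if G.IsClique (F : Set V) then mobiusTransform (safeEnergy M s z) F else 0 := by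
  simp only [cliquePotential, fillPattern_restrict, F.finite_toSet, true_and,
    Finset.finite_toSet_toFinset]
  split_ifs
  · exact mobiusTransform_congr fun E hE => by
      simp only [safeEnergy, fillOff_fillOff s (Finset.coe_subset.2 hE)]
  · rfl

theorem cliquePotential_restrict_eq_zero {F : Finset V} {z : V → A} {v : V} (hv : v ∈ F)
    (hzv : z v = s) : cliquePotential G M s F ((F : Set V).restrict z) = 0 := by
  rw [cliquePotential_restrict]
  split_ifs
  · exact mobiusTransform_eq_zero_of_insert_eq hv fun E _ => by
      simp only [safeEnergy, Finset.coe_insert, fillOff_insert_of_eq s _ hzv]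
  · rfl

theorem cliquePotential_const (hM : IsMarkovCocycle G X M) (hσ : (fun _ => s) ∈ X)
    (F : Set V) : cliquePotential G M s F (F.restrict fun _ => s) = 0 := by
  have hzero : safeEnergy M s (fun _ => s) = 0 := funext fun E => by
    simp only [safeEnergy, fillOff_const, hM.apply_self hσ, Pi.zero_apply]
  simp only [cliquePotential, fillPattern_restrict, fillOff_const, hzero, mobiusTransform_zero,
    dite_eq_ite, ite_self]

theorem safeEnergy_insert_sub_insert (hM : IsMarkovCocycle G X M) (hs : IsSafeSymbol X s)
    {z : V → A} (hz : z ∈ X) (E : Finset V) {v w : V} (hvw : v ≠ w) (hadj : ¬ G.Adj v w) :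
    safeEnergy M s z (insert v (insert w E)) - safeEnergy M s z (insert w E) =
      safeEnergy M s z (insert v E) - safeEnergy M s z E := by
  have hstep : ∀ B : Finset V, safeEnergy M s z (insert v B) - safeEnergy M s z B =
      M (fillOff s B z) (fillOff s (insert v B : Finset V) z) := fun B => by
    rw [hM.eq_sub (fillOff_mem_Delta s hs hz Set.finite_empty B.finite_toSet)
      (fillOff_mem_Delta s hs hz B.finite_toSet (insert v B).finite_toSet), fillOff_empty]
    rfl
  rw [hstep, hstep]
  refine hM.2.2 _ _ _ _ (fillOff_mem_Delta s hs hz (Finset.finite_toSet _) (Finset.finite_toSet _))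
    (fillOff_mem_Delta s hs hz (Finset.finite_toSet _) (Finset.finite_toSet _))
    ⟨{v}, Set.finite_singleton v, fun u hu => ?_, fun u hu => ?_⟩
  · simp_all [fillOff]
  · have huw : u ≠ w := by
      rintro rfl
      rcases hu with hu | ⟨-, _, rfl, hwv⟩
      · exact hvw hu.symm
      · exact hadj hwv.symm
    simp [fillOff, huw]

theorem cliquePotential_restrict_of_mem (hM : IsMarkovCocycle G X M) (hs : IsSafeSymbol X s)
    {z : V → A} (hz : z ∈ X) (F : Finset V) :
    cliquePotential G M s F ((F : Set V).restrict z) = mobiusTransform (safeEnergy M s z) F := by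
  rw [cliquePotential_restrict, ite_eq_left_iff]
  intro hF
  obtain ⟨v, hv, w, hw, hvw, hadj⟩ : ∃ v ∈ F, ∃ w ∈ F, v ≠ w ∧ ¬ G.Adj v w := by
    simpa [SimpleGraph.IsClique, Set.Pairwise] using hF
  exact (mobiusTransform_eq_zero_of_insert_sub_eq hv hw hvw fun E _ =>
    safeEnergy_insert_sub_insert hM hs hz E hvw hadj).symm

theorem gibbsSum_cliquePotential_const (hM : IsMarkovCocycle G X M) (hs : IsSafeSymbol X s)
    {z : V → A} (hz : z ∈ X) (hfin : {v | z v ≠ s}.Finite) :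
    gibbsSum (cliquePotential G M s) (fun _ => s) z = M (fun _ => s) z := by
  have hσ : (fun _ => s) ∈ X := fillOff_empty s z ▸ hs z hz ∅
  set K := hfin.toFinset
  have hsupp : (Function.support fun F : Set V => cliquePotential G M s F (F.restrict z) -
      cliquePotential G M s F (F.restrict fun _ => s)) ⊆
        ↑(K.powerset.image ((↑) : Finset V → Set V)) := by
    intro F hF
    rw [Function.mem_support, cliquePotential_const hM hσ, sub_zero] at hF
    obtain ⟨F, rfl⟩ := (not_not.1 fun h => hF
      (isNNInteraction_cliquePotential G M s F (fun h' => h h'.1) _)).exists_finset_coe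
    refine Finset.mem_coe.2 (Finset.mem_image_of_mem _ (Finset.mem_powerset.2 fun v hv => ?_))
    exact hfin.mem_toFinset.2 fun hzv => hF (cliquePotential_restrict_eq_zero hv hzv)
  rw [gibbsSum, finsum_eq_finsetSum_of_support_subset _ hsupp,
    Finset.sum_image fun _ _ _ _ h => Finset.coe_injective h]
  simp only [cliquePotential_const hM hσ, sub_zero, cliquePotential_restrict_of_mem hM hs hz,
    sum_powerset_mobiusTransform, safeEnergy]
  rw [fillOff_eq_self s fun v hv => by_contra fun h => hv (hfin.mem_toFinset.2 h)]

theorem IsMarkovCocycle.eq_gibbsSum_cliquePotential (hM : IsMarkovCocycle G X M)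
    (hlf : ∀ v : V, (G.neighborSet v).Finite) (hs : IsSafeSymbol X s) {x y : V → A}
    (hxy : (x, y) ∈ Delta X) : M x y = gibbsSum (cliquePotential G M s) x y := by
  obtain ⟨hx, hy, hD⟩ := hxy
  set D := {v | x v ≠ y v}
  set N := D ∪ boundary G D
  have hN : N.Finite := hD.union (finite_boundary hlf hD)
  have hsim : MarkovSimilar G x y (fillOff s N x) (fillOff s N y) := by
    refine ⟨D, hD, fun u hu => ?_, fun u hu => by simp [fillOff, show u ∈ N from hu]⟩
    have hxyu : x u = y u := not_not.1 hu
    simp [fillOff, hxyu]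
  have hxy' : (fillOff s N x, fillOff s N y) ∈ Delta X :=
    ⟨hs x hx N, hs y hy N, hD.subset fun v hv => by_contra fun h => hv (by
      simp [fillOff, show x v = y v from not_not.1 h])⟩
  have hσx : ((fun _ => s), fillOff s N x) ∈ Delta X :=
    fillOff_empty s x ▸ fillOff_mem_Delta s hs hx Set.finite_empty hN
  have hσy : ((fun _ => s), fillOff s N y) ∈ Delta X :=
    fillOff_empty s y ▸ fillOff_mem_Delta s hs hy Set.finite_empty hN
  have hU := isNNInteraction_cliquePotential G M s
  calc M x y = M (fillOff s N x) (fillOff s N y) := hM.2.2 _ _ _ _ ⟨hx, hy, hD⟩ hxy' hsim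
    _ = M (fun _ => s) (fillOff s N y) - M (fun _ => s) (fillOff s N x) := hM.eq_sub hσx hxy'
    _ = gibbsSum (cliquePotential G M s) (fun _ => s) (fillOff s N y) -
          gibbsSum (cliquePotential G M s) (fun _ => s) (fillOff s N x) := by
      rw [gibbsSum_cliquePotential_const hM hs hxy'.2.1 (hN.subset (setOf_fillOff_ne_subset ..)),
        gibbsSum_cliquePotential_const hM hs hxy'.1 (hN.subset (setOf_fillOff_ne_subset ..))]
    _ = gibbsSum (cliquePotential G M s) (fillOff s N x) (fillOff s N y) := by
      rw [hU.gibbsSum_add hlf hσx.2.2 hxy'.2.2, add_sub_cancel_left]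
    _ = gibbsSum (cliquePotential G M s) x y := (hU.gibbsSum_eq_of_markovSimilar hsim).symm

theorem safeEnergy_confAct {g : Equiv.Perm V}
    (hMg : ∀ x y : V → A, M (confAct g x) (confAct g y) = M x y) (z : V → A) (E : Finset V) :
    safeEnergy M s (confAct g z) (E.image g) = safeEnergy M s z E := by
  have hσ : confAct g (fun _ => s) = fun _ : V => s := rfl
  rw [safeEnergy, Finset.coe_image, fillOff_confAct, ← hσ, hMg, safeEnergy]

theorem cliquePotential_confAct {g : Equiv.Perm V}
    (hg : ∀ u v : V, G.Adj (g u) (g v) ↔ G.Adj u v)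
    (hMg : ∀ x y : V → A, M (confAct g x) (confAct g y) = M x y) (F : Set V) (x : V → A) :
    cliquePotential G M s (g '' F) ((g '' F).restrict (confAct g x)) =
      cliquePotential G M s F (F.restrict x) := by
  have hcond : (g '' F).Finite ∧ G.IsClique (g '' F) ↔ F.Finite ∧ G.IsClique F := by
    simp only [Set.finite_image_iff g.injective.injOn, SimpleGraph.IsClique, Set.Pairwise,
      Set.forall_mem_image, hg, g.injective.ne_iff]
  simp only [cliquePotential, fillPattern_restrict, fillOff_confAct]
  by_cases h : F.Finite ∧ G.IsClique F
  · rw [dif_pos (hcond.2 h), dif_pos h]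
    have himg : (hcond.2 h).1.toFinset = h.1.toFinset.image g := by
      ext u
      simp only [Set.Finite.mem_toFinset, Finset.mem_image, Set.mem_image]
    rw [himg, mobiusTransform_image _ g.injective]
    exact mobiusTransform_congr fun E _ => safeEnergy_confAct hMg _ E
  · rw [dif_neg (mt hcond.1 h), dif_neg h]

end CliquePotential

theorem statement5_general
    (G : SimpleGraph V) (hlf : ∀ v : V, (G.neighborSet v).Finite)
    (S : Subgroup (Equiv.Perm V)) (hS : PreservesAdj G S)
    (X : Set (V → A)) (hXinv : InvariantSpace S X)
    (s : A) (hs : IsSafeSymbol X s) :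
    markovSetInv G S X = gibbsSetInv G S X := by
  ext M
  constructor
  · rintro ⟨hM, hMinv⟩
    exact ⟨hM.1, cliquePotential G M s, isNNInteraction_cliquePotential G M s,
      fun g hg => cliquePotential_confAct (hS g hg) (hMinv g hg),
      fun x y hxy => hM.eq_gibbsSum_cliquePotential hlf hs hxy⟩
  · rintro ⟨hM0, U, hU, hUinv, hMU⟩
    refine ⟨hU.isMarkovCocycle hlf hM0 hMU, fun g hg x y => ?_⟩
    by_cases hxy : (x, y) ∈ Delta X
    · rw [hMU _ _ ((confAct_mem_Delta_iff hXinv hg).2 hxy), hMU x y hxy]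
      exact gibbsSum_confAct (hUinv g hg) x y
    · rw [hM0 x y hxy, hM0 _ _ (mt (confAct_mem_Delta_iff hXinv hg).1 hxy)]

/-- strong Hammersley-Clifford theorem, part 2. On a `G`-invariant
topological Markov field with a safe symbol, every `G`-invariant Markov cocycle is a
Gibbs cocycle with some `G`-invariant nearest neighbour interaction: `𝐌^G_X = 𝐆^G_X`. -/
theorem statement5 [Countable V] [Fintype A] [TopologicalSpace A] [DiscreteTopology A]
    (G : SimpleGraph V) (hlf : ∀ v : V, (G.neighborSet v).Finite)
    (S : Subgroup (Equiv.Perm V)) (hS : PreservesAdj G S)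
    (X : Set (V → A)) (hX : IsTMF G X) (hXinv : InvariantSpace S X)
    (s : A) (hs : IsSafeSymbol X s) :
    markovSetInv G S X = gibbsSetInv G S X :=
  statement5_general G hlf S hS X hXinv s hs

end HC
end

section
/- Let X be an n.n.constraint space, M a Markov cocycle and V a nearest neighbour interaction on X. Then the relation 'being V-good' (viewed as the relation {(x,y) : (x,y) ∈ Δ_X is V-good} together with the diagonal) is an equivalence relation on X; moreover if (x,y), (z,w) ∈ Δ_X are Markov-similar, then (x,y) is V-good if and only if (z,w) is V-good. -/
/-!
Both `M` and the Gibbs sum of a nearest neighbour interaction are additive cocycles on `Δ_X`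
(the Gibbs sum is a finite sum for asymptotic pairs because `𝒢` is locally finite), so the set
of pairs on which they agree is closed under reversal and composition. Both are also invariant
under Markov similarity: a clique meeting the set `A` of the similarity lies in `A ∪ ∂A`, where
the two pairs agree, and a clique missing `A` contributes nothing to either sum.
-/

open scoped Classical

namespace HC

variable {V : Type*} {A : Type*}

/-- The `V`-good relation together with the diagonal. -/
def goodRel (X : Set (V → A)) (M : (V → A) → (V → A) → ℝ)
    (U : ∀ F : Set V, (F → A) → ℝ) (x y : V → A) : Prop :=
  x = y ∨ ((x, y) ∈ Delta X ∧ VGood M U x y)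

section Delta

variable {X : Set (V → A)} {x y z : V → A}

lemma setOf_ne_subset_union (x y z : V → A) :
    {v | x v ≠ z v} ⊆ {v | x v ≠ y v} ∪ {v | y v ≠ z v} := by
  intro v hxz
  rcases eq_or_ne (x v) (y v) with h | h
  · exact Or.inr fun hyz => hxz (h.trans hyz)
  · exact Or.inl h

lemma mem_Delta_self (hx : x ∈ X) : (x, x) ∈ Delta X :=
  ⟨hx, hx, by simp⟩

lemma mem_Delta_swap (h : (x, y) ∈ Delta X) : (y, x) ∈ Delta X :=
  ⟨h.2.1, h.1, by simpa only [ne_comm] using h.2.2⟩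

lemma mem_Delta_trans (hxy : (x, y) ∈ Delta X) (hyz : (y, z) ∈ Delta X) :
    (x, z) ∈ Delta X :=
  ⟨hxy.1, hyz.2.1, (hxy.2.2.union hyz.2.2).subset (setOf_ne_subset_union x y z)⟩

end Delta

section Cliques

variable {G : SimpleGraph V} {F : Set V}

lemma isClique_subset_insert_neighborSet (hF : G.IsClique F) {v : V} (hv : v ∈ F) :
    F ⊆ insert v (G.neighborSet v) := by
  intro u hu
  by_cases huv : u = v
  · exact huv ▸ Set.mem_insert u _
  · exact Set.mem_insert_of_mem _ (hF hv hu (Ne.symm huv))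

lemma isClique_subset_union_boundary (hF : G.IsClique F) {S : Set V} {v : V}
    (hvF : v ∈ F) (hvS : v ∈ S) : F ⊆ S ∪ boundary G S := by
  intro u hu
  by_cases huS : u ∈ S
  · exact Or.inl huS
  · exact Or.inr ⟨huS, v, hvS, hF hu hvF fun h => huS (h ▸ hvS)⟩

end Cliques

section GibbsSum

variable {G : SimpleGraph V} {U : ∀ F : Set V, (F → A) → ℝ}

lemma IsNNInteraction.finite_support_gibbsSum (hlf : ∀ v : V, (G.neighborSet v).Finite)
    (hU : IsNNInteraction G U) {x y : V → A} (hxy : {v | x v ≠ y v}.Finite) :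
    (Function.support fun F : Set V => U F (F.restrict y) - U F (F.restrict x)).Finite := by
  refine ((hxy.biUnion fun v _ => (hlf v).insert v).finite_subsets).subset fun F hF => ?_
  by_cases hc : F.Finite ∧ G.IsClique F
  · obtain ⟨v, hvF, hv⟩ : ∃ v ∈ F, x v ≠ y v := by
      by_contra! h
      exact hF (sub_eq_zero.mpr (congrArg (U F) (funext fun u => (h u u.2).symm)))
    exact (isClique_subset_insert_neighborSet hc.2 hvF).trans
      (Set.subset_biUnion_of_mem (u := fun v => insert v (G.neighborSet v)) hv)
  · simp [hU F hc] at hF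

lemma gibbsSum_swap (U : ∀ F : Set V, (F → A) → ℝ) (x y : V → A) :
    gibbsSum U y x = -gibbsSum U x y := by
  rw [gibbsSum, gibbsSum, ← finsum_neg_distrib]
  exact finsum_congr fun F => by ring

lemma IsNNInteraction.gibbsSum_trans (hlf : ∀ v : V, (G.neighborSet v).Finite)
    (hU : IsNNInteraction G U) {x y z : V → A}
    (hxy : {v | x v ≠ y v}.Finite) (hyz : {v | y v ≠ z v}.Finite) :
    gibbsSum U x z = gibbsSum U x y + gibbsSum U y z := by
  rw [gibbsSum, gibbsSum, gibbsSum, ← finsum_add_distrib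
    (hU.finite_support_gibbsSum hlf hxy) (hU.finite_support_gibbsSum hlf hyz)]
  exact finsum_congr fun F => by ring

lemma IsNNInteraction.gibbsSum_eq_of_markovSimilar_s6 (hU : IsNNInteraction G U)
    {x y z w : V → A} (h : MarkovSimilar G x y z w) :
    gibbsSum U x y = gibbsSum U z w := by
  obtain ⟨S, -, hout, hin⟩ := h
  refine finsum_congr fun F => ?_
  by_cases hc : F.Finite ∧ G.IsClique F
  · by_cases hmeet : ∃ v ∈ F, v ∈ S
    · obtain ⟨v, hvF, hvS⟩ := hmeet
      have hFS := isClique_subset_union_boundary hc.2 hvF hvS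
      congr 2 <;> funext u
      exacts [(hin u (hFS u.2)).2, (hin u (hFS u.2)).1]
    · push Not at hmeet
      refine (sub_eq_zero.mpr ?_).trans (sub_eq_zero.mpr ?_).symm <;> congr 1 <;> funext u
      exacts [(hout u (hmeet u u.2)).1.symm, (hout u (hmeet u u.2)).2.symm]
  · simp only [hU F hc, sub_self]

end GibbsSum

section MarkovCocycle

variable {G : SimpleGraph V} {X : Set (V → A)} {M : (V → A) → (V → A) → ℝ}

lemma IsMarkovCocycle.apply_self_s6 (hM : IsMarkovCocycle G X M) {x : V → A} (hx : x ∈ X) :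
    M x x = 0 := by
  have := hM.2.1 x x x (mem_Delta_self hx) (mem_Delta_self hx)
  linarith

lemma IsMarkovCocycle.apply_swap (hM : IsMarkovCocycle G X M) {x y : V → A}
    (h : (x, y) ∈ Delta X) : M y x = -M x y := by
  have := hM.2.1 x y x h (mem_Delta_swap h)
  rw [hM.apply_self_s6 h.1] at this
  linarith

end MarkovCocycle

section GoodRel

variable {G : SimpleGraph V} {X : Set (V → A)} {M : (V → A) → (V → A) → ℝ}
  {U : ∀ F : Set V, (F → A) → ℝ}

lemma goodRel_refl (x : V → A) : goodRel X M U x x :=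
  Or.inl rfl

lemma IsMarkovCocycle.goodRel_symm (hM : IsMarkovCocycle G X M) {x y : V → A}
    (h : goodRel X M U x y) : goodRel X M U y x := by
  rcases h with rfl | ⟨hxy, hgood⟩
  · exact goodRel_refl x
  · refine Or.inr ⟨mem_Delta_swap hxy, ?_⟩
    rw [VGood, hM.apply_swap hxy, gibbsSum_swap, hgood]

lemma IsMarkovCocycle.goodRel_trans (hlf : ∀ v : V, (G.neighborSet v).Finite)
    (hM : IsMarkovCocycle G X M) (hU : IsNNInteraction G U) {x y z : V → A}
    (hxy : goodRel X M U x y) (hyz : goodRel X M U y z) : goodRel X M U x z := by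
  rcases hxy with rfl | ⟨hxy, hgood₁⟩
  · exact hyz
  rcases hyz with rfl | ⟨hyz, hgood₂⟩
  · exact Or.inr ⟨hxy, hgood₁⟩
  refine Or.inr ⟨mem_Delta_trans hxy hyz, ?_⟩
  rw [VGood, hM.2.1 x y z hxy hyz, hgood₁, hgood₂,
    ← hU.gibbsSum_trans hlf hxy.2.2 hyz.2.2]

lemma IsMarkovCocycle.vGood_iff_of_markovSimilar (hM : IsMarkovCocycle G X M)
    (hU : IsNNInteraction G U) {x y z w : V → A} (hxy : (x, y) ∈ Delta X)
    (hzw : (z, w) ∈ Delta X) (h : MarkovSimilar G x y z w) :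
    VGood M U x y ↔ VGood M U z w := by
  rw [VGood, VGood, hM.2.2 x y z w hxy hzw h, hU.gibbsSum_eq_of_markovSimilar_s6 h]

end GoodRel

theorem statement6_general
    (G : SimpleGraph V) (hlf : ∀ v : V, (G.neighborSet v).Finite)
    (X : Set (V → A))
    (M : (V → A) → (V → A) → ℝ) (hM : IsMarkovCocycle G X M)
    (U : ∀ F : Set V, (F → A) → ℝ) (hU : IsNNInteraction G U) :
    ((∀ x ∈ X, goodRel X M U x x) ∧
      (∀ x ∈ X, ∀ y ∈ X, goodRel X M U x y → goodRel X M U y x) ∧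
      (∀ x ∈ X, ∀ y ∈ X, ∀ z ∈ X,
        goodRel X M U x y → goodRel X M U y z → goodRel X M U x z)) ∧
    (∀ x y z w : V → A, (x, y) ∈ Delta X → (z, w) ∈ Delta X →
      MarkovSimilar G x y z w → (VGood M U x y ↔ VGood M U z w)) :=
  ⟨⟨fun x _ => goodRel_refl x,
      fun _ _ _ _ => hM.goodRel_symm,
      fun _ _ _ _ _ _ => hM.goodRel_trans hlf hU⟩,
    fun _ _ _ _ hxy hzw => hM.vGood_iff_of_markovSimilar hU hxy hzw⟩

/-- `V`-goodness (together with the diagonal) is an equivalence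
relation on `X`, and it is preserved by Markov similarity. -/
theorem statement6 [Countable V] [Fintype A]
    (G : SimpleGraph V) (hlf : ∀ v : V, (G.neighborSet v).Finite)
    (X : Set (V → A)) (hX : IsNNConstraint G X)
    (M : (V → A) → (V → A) → ℝ) (hM : IsMarkovCocycle G X M)
    (U : ∀ F : Set V, (F → A) → ℝ) (hU : IsNNInteraction G U) :
    ((∀ x ∈ X, goodRel X M U x x) ∧
      (∀ x ∈ X, ∀ y ∈ X, goodRel X M U x y → goodRel X M U y x) ∧
      (∀ x ∈ X, ∀ y ∈ X, ∀ z ∈ X,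
        goodRel X M U x y → goodRel X M U y z → goodRel X M U x z)) ∧
    (∀ x y z w : V → A, (x, y) ∈ Delta X → (z, w) ∈ Delta X →
      MarkovSimilar G x y z w → (VGood M U x y ↔ VGood M U z w)) :=
  statement6_general G hlf X M hM U hU
end HC
end
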